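/- arXiv:2105.04319 — 3 statements merged into one kernel-verified Lean document; each statement's English description precedes it below -/
import Mathlib

section
/- Convergence in finite dimensions: under the standing assumptions with Θ = ℝ^N (a finite-dimensional Euclidean space) and J(θ) = ‖θ‖₁ the ℓ¹-norm, suppose in addition that 𝓛 is μ-strongly convex for some μ > 0 (so 𝓛 has a unique minimizer θ*) and that the step sizes satisfy τ^(k) ≤ μ/(2δL²), are non-increasing, square-summable, and non-summable (Σ_{k=0}^∞ τ^(k) = ∞). Then, with d_k := E[D_{J_δ}^{v^(k)}(θ*, θ^(k))], the whole sequence converges: lim_{k→∞} d_k = 0, and in particular lim_{k→∞} E[‖θ* − θ^(k)‖²] = 0. -/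
/-!
Write `d k` for the expected Bregman distance `E[D_{J_δ}^{v k}(θ*, θ k)]` and
`a k = E‖θ* - θ k‖²`. The primal iterate `θ k` is the proximal point of `δ ‖·‖₁` at `δ • v k`,
i.e. `δ • shrink (v k)`, so `v k - δ⁻¹ • θ k` is an `ℓ¹`-subgradient at `θ k`, and `θ k` is a
measurable function of the first `k` samples, hence independent of the `k`-th. Expanding one step,
unbiasedness kills the noise cross term, strong convexity contributes `-(μ/2) τ_k a_k`, and the
variance bound with the Lipschitz gradient controls the quadratic term, so that
`d (k+1) ≤ d k - (μ/8) τ_k a_k + C τ_k²`. Hence `d k` converges and `∑ τ_k a_k < ∞`; since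
`∑ τ_k = ∞`, `a k` is small infinitely often. In finite dimensions `‖·‖₁ ≤ √N ‖·‖₂` gives
`d ≤ ε + M_ε a`, so `d k → 0`, and `a k ≤ 2 δ d k`.
-/

open MeasureTheory Filter
open scoped RealInnerProductSpace ENNReal Topology

noncomputable section

/-- Subdifferential membership for an extended-real-valued functional on a Hilbert space. -/
def ESubgradAt {Θ : Type*} [NormedAddCommGroup Θ] [InnerProductSpace ℝ Θ]
    (J : Θ → EReal) (p θ : Θ) : Prop :=
  ∀ θ' : Θ, J θ + ((⟪p, θ' - θ⟫ : ℝ) : EReal) ≤ J θ'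

/-- Convexity of an extended-real-valued functional. -/
def EConvexOn {Θ : Type*} [NormedAddCommGroup Θ] [InnerProductSpace ℝ Θ]
    (J : Θ → EReal) : Prop :=
  ∀ θ₁ θ₂ : Θ, ∀ a b : ℝ, 0 ≤ a → 0 ≤ b → a + b = 1 →
    J (a • θ₁ + b • θ₂) ≤ (a : EReal) * J θ₁ + (b : EReal) * J θ₂

/-- Real-valued Bregman distance (used at points where `J` is finite). -/
def DBreg {Θ : Type*} [NormedAddCommGroup Θ] [InnerProductSpace ℝ Θ]
    (J : Θ → EReal) (p θbar θ : Θ) : ℝ :=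
  (J θbar).toReal - (J θ).toReal - ⟪p, θbar - θ⟫

/-- Symmetric Bregman distance. -/
def DBregSym {Θ : Type*} [NormedAddCommGroup Θ] [InnerProductSpace ℝ Θ]
    (J : Θ → EReal) (p pbar θbar θ : Θ) : ℝ :=
  DBreg J p θbar θ + DBreg J pbar θ θbar

/-- The elastic-net functional `J_δ(θ) = J(θ) + ‖θ‖²/(2δ)`. -/
def elasticNet {Θ : Type*} [NormedAddCommGroup Θ] [InnerProductSpace ℝ Θ]
    (J : Θ → EReal) (δ : ℝ) (θ : Θ) : EReal :=
  J θ + ((‖θ‖ ^ 2 / (2 * δ) : ℝ) : EReal)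

lemma exists_tendsto_and_summable_of_le_sub_add {d b e : ℕ → ℝ} (hd : ∀ k, 0 ≤ d k)
    (hb : ∀ k, 0 ≤ b k) (he : ∀ k, 0 ≤ e k) (hes : Summable e)
    (hrec : ∀ k, d (k + 1) ≤ d k - b k + e k) :
    (∃ l, Tendsto d atTop (𝓝 l)) ∧ Summable b := by
  -- `d` plus the tail of `∑ e` is nonnegative and decreases by at least `b k` at step `k`
  set E : ℕ → ℝ := fun k => d k + ∑' j, e (j + k) with hE
  have hE_succ : ∀ k, E (k + 1) + b k ≤ E k := by
    intro k
    have htail := ((summable_nat_add_iff k).2 hes).tsum_eq_zero_add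
    simp only [zero_add, add_right_comm _ 1 k, add_assoc] at htail
    simp only [hE, htail]
    linarith [hrec k]
  have hE_nonneg : ∀ k, 0 ≤ E k := fun k =>
    add_nonneg (hd k) (tsum_nonneg fun j => he (j + k))
  have hE_anti : Antitone E := antitone_nat_of_succ_le fun k => by linarith [hE_succ k, hb k]
  have hE_tendsto : Tendsto E atTop (𝓝 (⨅ k, E k)) :=
    tendsto_atTop_ciInf hE_anti ⟨0, Set.forall_mem_range.2 hE_nonneg⟩
  refine ⟨⟨⨅ k, E k, ?_⟩, ?_⟩
  · simpa [hE] using hE_tendsto.sub (tendsto_sum_nat_add e)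
  · refine summable_of_sum_range_le hb (c := E 0) fun n => ?_
    have htel : ∑ k ∈ Finset.range n, b k ≤ E 0 - E n := by
      rw [← Finset.sum_range_sub']
      exact Finset.sum_le_sum fun k _ => by linarith [hE_succ k]
    linarith [hE_nonneg n]

lemma frequently_lt_of_summable_mul_of_not_summable {τ a : ℕ → ℝ} (hτ : ∀ k, 0 ≤ τ k)
    (hτ_sum : ¬ Summable τ) (hτa : Summable fun k => τ k * a k) {η : ℝ} (hη : 0 < η) :
    ∃ᶠ k in atTop, a k < η := by
  refine fun hge => hτ_sum (.of_norm_bounded_eventually_nat (hτa.div_const η) ?_)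
  filter_upwards [hge] with k hk
  rw [Real.norm_of_nonneg (hτ k), le_div_iff₀ hη]
  exact mul_le_mul_of_nonneg_left (not_lt.1 hk) (hτ k)

lemma tendsto_zero_of_le_sub_mul_add_sq {d a τ : ℕ → ℝ} {c C : ℝ} (hc : 0 < c) (hC : 0 ≤ C)
    (hd : ∀ k, 0 ≤ d k) (ha : ∀ k, 0 ≤ a k) (hτ : ∀ k, 0 ≤ τ k)
    (hτ_sq : Summable fun k => τ k ^ 2) (hτ_sum : ¬ Summable τ)
    (hrec : ∀ k, d (k + 1) ≤ d k - c * (τ k * a k) + C * τ k ^ 2)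
    (hda : ∀ ε > 0, ∃ M, ∀ k, d k ≤ ε + M * a k) :
    Tendsto d atTop (𝓝 0) := by
  obtain ⟨⟨l, hl⟩, hsum⟩ := exists_tendsto_and_summable_of_le_sub_add hd
    (fun k => mul_nonneg hc.le (mul_nonneg (hτ k) (ha k)))
    (fun k => mul_nonneg hC (sq_nonneg (τ k))) (hτ_sq.mul_left C) hrec
  have hτa : Summable fun k => τ k * a k := (summable_mul_left_iff hc.ne').1 hsum
  suffices l ≤ 0 by rwa [le_antisymm this (ge_of_tendsto' hl hd)] at hl
  refine le_of_forall_pos_le_add fun ε hε => ?_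
  obtain ⟨M, hM⟩ := hda (ε / 2) (half_pos hε)
  have hfreq := frequently_lt_of_summable_mul_of_not_summable hτ hτ_sum hτa
    (η := ε / 2 / (|M| + 1)) (by positivity)
  refine le_of_tendsto_of_frequently hl (hfreq.mono fun k hk => ?_)
  have : M * a k ≤ ε / 2 := calc
    M * a k ≤ |M| * a k := mul_le_mul_of_nonneg_right (le_abs_self M) (ha k)
    _ ≤ (|M| + 1) * (ε / 2 / (|M| + 1)) := mul_le_mul (by linarith) hk.le (ha k) (by positivity)
    _ = ε / 2 := by field_simp
  linarith [hM k]

section Bregman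

variable {E : Type*} [NormedAddCommGroup E] [InnerProductSpace ℝ E] {J : E → ℝ} {δ : ℝ}

lemma inner_le_mul_sq_add_sq_div (hδ : 0 < δ) (x y : E) :
    ⟪x, y⟫ ≤ δ / 2 * ‖x‖ ^ 2 + ‖y‖ ^ 2 / (2 * δ) := by
  have h := norm_sub_sq_real (δ • x) y
  rw [real_inner_smul_left, norm_smul, Real.norm_of_nonneg hδ.le] at h
  have : 0 ≤ ‖δ • x - y‖ ^ 2 / (2 * δ) := by positivity
  rw [h] at this
  field_simp at this ⊢
  linarith

lemma abs_real_inner_le_add_sq_div_two (x y : E) : |⟪x, y⟫| ≤ (‖x‖ ^ 2 + ‖y‖ ^ 2) / 2 := by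
  nlinarith [abs_real_inner_le_norm x y, sq_nonneg (‖x‖ - ‖y‖)]

lemma norm_add_sq_le_three_mul (x y : E) : ‖x + y‖ ^ 2 ≤ 3 * ‖x‖ ^ 2 + 3 / 2 * ‖y‖ ^ 2 := by
  have := inner_le_mul_sq_add_sq_div (δ := 2) two_pos x y
  rw [norm_add_sq_real]
  linarith

lemma elasticNet_coe_comp (x : E) :
    elasticNet ((↑) ∘ J) δ x = ((J x + ‖x‖ ^ 2 / (2 * δ) : ℝ) : EReal) :=
  (EReal.coe_add _ _).symm

lemma eSubgradAt_coe_comp_iff {p θ : E} :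
    ESubgradAt ((↑) ∘ J) p θ ↔ ∀ θ', J θ + ⟪p, θ' - θ⟫ ≤ J θ' := by
  simp only [ESubgradAt, Function.comp_apply, ← EReal.coe_add, EReal.coe_le_coe_iff]

lemma eSubgradAt_elasticNet_coe_comp_iff {v θ : E} :
    ESubgradAt (elasticNet ((↑) ∘ J) δ) v θ ↔
      ∀ θ', J θ + ‖θ‖ ^ 2 / (2 * δ) + ⟪v, θ' - θ⟫ ≤ J θ' + ‖θ'‖ ^ 2 / (2 * δ) := by
  simp only [ESubgradAt, elasticNet_coe_comp, ← EReal.coe_add, EReal.coe_le_coe_iff]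

lemma DBreg_coe_comp (p θbar θ : E) :
    DBreg ((↑) ∘ J) p θbar θ = J θbar - J θ - ⟪p, θbar - θ⟫ := by
  simp [DBreg]

lemma DBreg_elasticNet_coe_comp (p θbar θ : E) :
    DBreg (elasticNet ((↑) ∘ J) δ) p θbar θ =
      J θbar + ‖θbar‖ ^ 2 / (2 * δ) - (J θ + ‖θ‖ ^ 2 / (2 * δ)) - ⟪p, θbar - θ⟫ := by
  rw [DBreg, elasticNet_coe_comp, elasticNet_coe_comp, EReal.toReal_coe, EReal.toReal_coe]

lemma DBreg_elasticNet_eq (hδ : δ ≠ 0) (v θbar θ : E) :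
    DBreg (elasticNet ((↑) ∘ J) δ) v θbar θ =
      DBreg ((↑) ∘ J) (v - δ⁻¹ • θ) θbar θ + ‖θbar - θ‖ ^ 2 / (2 * δ) := by
  rw [DBreg_elasticNet_coe_comp, DBreg_coe_comp, inner_sub_left, real_inner_smul_left,
    show ‖θbar‖ ^ 2 = ‖θ + (θbar - θ)‖ ^ 2 by rw [add_sub_cancel], norm_add_sq_real]
  field_simp
  ring

lemma sq_norm_div_le_DBreg_elasticNet (hδ : 0 < δ) {v θ : E}
    (hθ : ESubgradAt ((↑) ∘ J) (v - δ⁻¹ • θ) θ) (θbar : E) :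
    ‖θbar - θ‖ ^ 2 / (2 * δ) ≤ DBreg (elasticNet ((↑) ∘ J) δ) v θbar θ := by
  rw [DBreg_elasticNet_eq hδ.ne', DBreg_coe_comp]
  linarith [eSubgradAt_coe_comp_iff.1 hθ θbar]

lemma eSubgradAt_elasticNet_iff_isMinOn (hδ : 0 < δ) {v θ : E} :
    ESubgradAt (elasticNet ((↑) ∘ J) δ) v θ ↔
      IsMinOn (fun t => ‖t - δ • v‖ ^ 2 / (2 * δ) + J t) Set.univ θ := by
  have hprox : ∀ t, ‖t - δ • v‖ ^ 2 / (2 * δ) + J t =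
      J t + ‖t‖ ^ 2 / (2 * δ) - ⟪v, t⟫ + δ * ‖v‖ ^ 2 / 2 := by
    intro t
    rw [norm_sub_sq_real, real_inner_smul_right, norm_smul, Real.norm_of_nonneg hδ.le]
    field_simp
    rw [real_inner_comm]
    ring
  simp only [eSubgradAt_elasticNet_coe_comp_iff, isMinOn_univ_iff, hprox, inner_sub_right]
  exact forall_congr' fun t => by constructor <;> intro h <;> linarith

lemma eq_of_isMinOn_prox (hδ : 0 < δ) {v s θ : E} (hs : ESubgradAt ((↑) ∘ J) (v - δ⁻¹ • s) s)
    (hθ : IsMinOn (fun t => ‖t - δ • v‖ ^ 2 / (2 * δ) + J t) Set.univ θ) : θ = s := by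
  have hθs := (eSubgradAt_elasticNet_coe_comp_iff.1 ((eSubgradAt_elasticNet_iff_isMinOn hδ).2 hθ)) s
  have hsθ := sq_norm_div_le_DBreg_elasticNet hδ hs θ
  rw [DBreg_elasticNet_coe_comp] at hsθ
  rw [← neg_sub θ s, inner_neg_right] at hθs
  have hle : ‖θ - s‖ ^ 2 ≤ 0 := by
    have : ‖θ - s‖ ^ 2 / (2 * δ) ≤ 0 := by linarith
    simpa using (div_le_iff₀ (by positivity)).1 this
  rw [← sub_eq_zero, ← norm_eq_zero]
  exact pow_eq_zero_iff two_ne_zero |>.1 (le_antisymm hle (sq_nonneg _))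

lemma DBreg_elasticNet_le (hδ : 0 < δ) (hJ_add : ∀ x y, J (x + y) ≤ J x + J y)
    (hJ_neg : ∀ x, J (-x) = J x) {v θ : E} (hθ : ESubgradAt ((↑) ∘ J) (v - δ⁻¹ • θ) θ)
    (θbar : E) :
    DBreg (elasticNet ((↑) ∘ J) δ) v θbar θ ≤ 2 * J (θbar - θ) + ‖θbar - θ‖ ^ 2 / (2 * δ) := by
  -- test the subgradient inequality at the reflection of `θbar` through `θ`
  have hrefl := eSubgradAt_coe_comp_iff.1 hθ (θ - (θbar - θ))
  rw [sub_sub_cancel_left, inner_neg_right] at hrefl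
  have h₁ := hJ_add (θbar - θ) θ
  have h₂ := hJ_add θ (-(θbar - θ))
  rw [sub_add_cancel] at h₁
  rw [← sub_eq_add_neg, hJ_neg] at h₂
  rw [DBreg_elasticNet_eq hδ.ne', DBreg_coe_comp]
  linarith

lemma DBreg_elasticNet_step_le (hδ : 0 < δ) {v θ : E} (hθ : ESubgradAt ((↑) ∘ J) (v - δ⁻¹ • θ) θ)
    (θbar θ' G : E) (t : ℝ) :
    DBreg (elasticNet ((↑) ∘ J) δ) (v - t • G) θbar θ' ≤
      DBreg (elasticNet ((↑) ∘ J) δ) v θbar θ + t * ⟪G, θbar - θ⟫ +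
        δ * t ^ 2 / 2 * ‖G‖ ^ 2 := by
  -- the gain `‖θ' - θ‖ ^ 2 / (2 * δ)` from the subgradient at `θ` absorbs Young's inequality
  have hθ' := sq_norm_div_le_DBreg_elasticNet hδ hθ θ'
  have hyoung := inner_le_mul_sq_add_sq_div hδ (t • G) (θ - θ')
  rw [real_inner_smul_left, norm_smul, mul_pow, Real.norm_eq_abs, sq_abs, norm_sub_rev] at hyoung
  simp only [DBreg_elasticNet_coe_comp] at *
  have hsplit : θbar - θ' = (θbar - θ) + (θ - θ') := by abel
  rw [inner_sub_left, real_inner_smul_left, hsplit, inner_add_right, inner_add_right]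
  simp only [inner_sub_right] at *
  linarith

end Bregman

section L1

variable {n : ℕ}

def l1Norm (x : EuclideanSpace ℝ (Fin n)) : ℝ := ∑ i, |x i|

lemma l1Norm_add_le (x y : EuclideanSpace ℝ (Fin n)) : l1Norm (x + y) ≤ l1Norm x + l1Norm y := by
  rw [l1Norm, l1Norm, l1Norm, ← Finset.sum_add_distrib]
  exact Finset.sum_le_sum fun i _ => abs_add_le (x i) (y i)

lemma l1Norm_neg (x : EuclideanSpace ℝ (Fin n)) : l1Norm (-x) = l1Norm x := by
  simp [l1Norm]

lemma l1Norm_le_sqrt_mul_norm (x : EuclideanSpace ℝ (Fin n)) : l1Norm x ≤ √n * ‖x‖ := by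
  simpa [l1Norm, EuclideanSpace.norm_eq] using
    Real.sum_mul_le_sqrt_mul_sqrt Finset.univ (fun _ => (1 : ℝ)) fun i => |x i|

lemma two_mul_l1Norm_le {ε : ℝ} (hε : 0 < ε) (x : EuclideanSpace ℝ (Fin n)) :
    2 * l1Norm x ≤ ε + n / ε * ‖x‖ ^ 2 := by
  have h := l1Norm_le_sqrt_mul_norm x
  have hsq : √(n : ℝ) ^ 2 = n := Real.sq_sqrt n.cast_nonneg
  rw [div_mul_eq_mul_div, ← hsq, ← mul_pow]
  have hAMGM : ε + (√n * ‖x‖) ^ 2 / ε - 2 * (√n * ‖x‖) = (ε - √n * ‖x‖) ^ 2 / ε := by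
    field_simp
    ring
  linarith [div_nonneg (sq_nonneg (ε - √n * ‖x‖)) hε.le]

lemma DBreg_elasticNet_l1Norm_le {δ ε : ℝ} (hδ : 0 < δ) (hε : 0 < ε)
    {v θ : EuclideanSpace ℝ (Fin n)} (hθ : ESubgradAt ((↑) ∘ l1Norm) (v - δ⁻¹ • θ) θ)
    (θbar : EuclideanSpace ℝ (Fin n)) :
    DBreg (elasticNet ((↑) ∘ l1Norm) δ) v θbar θ ≤ ε + (n / ε + 1 / (2 * δ)) * ‖θbar - θ‖ ^ 2 := by
  have h := DBreg_elasticNet_le hδ l1Norm_add_le l1Norm_neg hθ θbar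
  have := two_mul_l1Norm_le hε (θbar - θ)
  rw [add_mul, one_div_mul_eq_div]
  linarith

/-- Soft thresholding at level one. -/
def shrink (v : EuclideanSpace ℝ (Fin n)) : EuclideanSpace ℝ (Fin n) :=
  WithLp.toLp 2 fun i => v i - max (-1) (min 1 (v i))

lemma continuous_shrink : Continuous (shrink (n := n)) := by
  unfold shrink
  fun_prop

lemma abs_mul_shrink_add_le {δ : ℝ} (hδ : 0 ≤ δ) (c u : ℝ) :
    |δ * (c - max (-1) (min 1 c))| + max (-1) (min 1 c) * (u - δ * (c - max (-1) (min 1 c)))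
      ≤ |u| := by
  set m := max (-1) (min 1 c) with hm_def
  have hm : |m| ≤ 1 := abs_le.2 ⟨le_max_left _ _, max_le (by norm_num) (min_le_left _ _)⟩
  -- the clamped value `m` is the sign of the shrunk value `c - m`
  have hsign : m * (c - m) = |c - m| := by
    rcases le_total c (-1) with h | h
    · rw [hm_def, min_eq_right (by linarith), max_eq_left h, abs_of_nonpos (by linarith)]
      ring
    rcases le_total c 1 with h' | h'
    · rw [hm_def, min_eq_right h', max_eq_right h, sub_self, mul_zero, abs_zero]
    · rw [hm_def, min_eq_left h', max_eq_right (by norm_num), abs_of_nonneg (by linarith)]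
      ring
  have hmu : m * u ≤ |u| := by
    calc m * u ≤ |m| * |u| := by rw [← abs_mul]; exact le_abs_self _
    _ ≤ |u| := mul_le_of_le_one_left (abs_nonneg u) hm
  rw [abs_mul, abs_of_nonneg hδ, mul_sub, ← hsign]
  linarith

lemma eSubgradAt_l1Norm_smul_shrink {δ : ℝ} (hδ : 0 < δ) (v : EuclideanSpace ℝ (Fin n)) :
    ESubgradAt ((↑) ∘ l1Norm) (v - δ⁻¹ • δ • shrink v) (δ • shrink v) := by
  rw [eSubgradAt_coe_comp_iff]
  intro u
  rw [inv_smul_smul₀ hδ.ne', PiLp.inner_apply, l1Norm, l1Norm, ← Finset.sum_add_distrib]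
  refine Finset.sum_le_sum fun i _ => ?_
  simpa [shrink, mul_comm] using abs_mul_shrink_add_le hδ.le (v i) (u i)

lemma eq_smul_shrink_of_isMinOn {δ : ℝ} (hδ : 0 < δ) {v θ : EuclideanSpace ℝ (Fin n)}
    (hθ : IsMinOn (fun t => ‖t - δ • v‖ ^ 2 / (2 * δ) + l1Norm t) Set.univ θ) :
    θ = δ • shrink v :=
  eq_of_isMinOn_prox hδ (eSubgradAt_l1Norm_smul_shrink hδ v) hθ

end L1

lemma measurable_iSup_comap_of_recursion {Ω Ωp β : Type*} [MeasurableSpace Ω] [MeasurableSpace β]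
    {X : ℕ → Ωp → Ω} {Y : ℕ → Ωp → β}
    {F : ℕ → β → Ω → β} (hF : ∀ k, Measurable (Function.uncurry (F k))) {y₀ : β}
    (hY₀ : ∀ ω, Y 0 ω = y₀) (hY : ∀ k ω, Y (k + 1) ω = F k (Y k ω) (X k ω)) (k : ℕ) :
    Measurable[⨆ j ∈ Set.Iio k, MeasurableSpace.comap (X j) ‹_›] (Y k) := by
  induction k with
  | zero =>
    rw [show Y 0 = fun _ => y₀ from funext hY₀]
    exact measurable_const
  | succ k ih =>
    have hle : (⨆ j ∈ Set.Iio k, MeasurableSpace.comap (X j) ‹_›) ≤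
        ⨆ j ∈ Set.Iio (k + 1), MeasurableSpace.comap (X j) ‹_› :=
      biSup_mono fun j hj => lt_trans hj k.lt_succ_self
    have hX : MeasurableSpace.comap (X k) ‹_› ≤
        ⨆ j ∈ Set.Iio (k + 1), MeasurableSpace.comap (X j) ‹_› :=
      le_iSup₂ (f := fun j (_ : j ∈ Set.Iio (k + 1)) => MeasurableSpace.comap (X j) ‹_›) k
        k.lt_succ_self
    rw [show Y (k + 1) = Function.uncurry (F k) ∘ fun ω => (Y k ω, X k ω) from funext (hY k)]
    exact (hF k).comp ((ih.mono hle le_rfl).prodMk ((comap_measurable (X k)).mono hX le_rfl))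

namespace ProbabilityTheory

variable {Ω Ωp β : Type*} [MeasurableSpace Ω] [MeasurableSpace β] [MeasurableSpace Ωp]
  {P : Measure Ωp}

lemma iIndepFun.indepFun_of_measurable_iSup_comap_Iio {X : ℕ → Ωp → Ω}
    (hX : ∀ k, Measurable (X k)) (hind : iIndepFun X P) {k : ℕ} {Y : Ωp → β}
    (hY : Measurable[⨆ j ∈ Set.Iio k, MeasurableSpace.comap (X j) ‹_›] Y) :
    IndepFun Y (X k) P := by
  have h := indep_iSup_of_disjoint (fun j => (hX j).comap_le) hind.iIndep
    (S := Set.Iio k) (T := {k}) (by simp)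
  rw [iSup_singleton] at h
  exact (IndepFun_iff_Indep _ _ _).2 (indep_of_indep_of_le_left h hY.comap_le)

lemma iIndepFun.indepFun_of_mirror_recursion {E : Type*} [NormedAddCommGroup E]
    [NormedSpace ℝ E] [MeasurableSpace E] [BorelSpace E] [SecondCountableTopology E]
    {X : ℕ → Ωp → Ω} (hX : ∀ k, Measurable (X k)) (hind : iIndepFun X P)
    {g : E → Ω → E} (hg : Measurable (Function.uncurry g)) {φ : E → E} (hφ : Measurable φ)
    {τ : ℕ → ℝ} {θ v : ℕ → Ωp → E} {v₀ : E} (hv₀ : ∀ ω, v 0 ω = v₀)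
    (hv : ∀ k ω, v (k + 1) ω = v k ω - τ k • g (θ k ω) (X k ω))
    (hθ : ∀ k ω, θ k ω = φ (v k ω)) (k : ℕ) :
    IndepFun (θ k) (X k) P := by
  have hF : ∀ k, Measurable (Function.uncurry fun (w : E) x => w - τ k • g (φ w) x) := fun k =>
    measurable_fst.sub ((hg.comp ((hφ.comp measurable_fst).prodMk measurable_snd)).const_smul _)
  rw [show θ k = φ ∘ v k from funext (hθ k)]
  exact hind.indepFun_of_measurable_iSup_comap_Iio hX <| hφ.comp <|
    measurable_iSup_comap_of_recursion hF hv₀ (fun k ω => by rw [hv, hθ]) k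

variable [IsFiniteMeasure P] {μ : Measure Ω} {Y : Ωp → β} {Z : Ωp → Ω}

lemma IndepFun.map_prodMk_eq_prod (hY : Measurable Y) (hZ : Measurable Z)
    (hYZ : IndepFun Y Z P) (hZμ : P.map Z = μ) :
    P.map (fun ω => (Y ω, Z ω)) = (P.map Y).prod μ :=
  hZμ ▸ (indepFun_iff_map_prod_eq_prod_map_map hY.aemeasurable hZ.aemeasurable).1 hYZ

variable [SFinite μ]

lemma IndepFun.lintegral_comp_prodMk (hY : Measurable Y) (hZ : Measurable Z)
    (hYZ : IndepFun Y Z P) (hZμ : P.map Z = μ) {F : β × Ω → ℝ≥0∞} (hF : Measurable F) :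
    ∫⁻ ω, F (Y ω, Z ω) ∂P = ∫⁻ ω, ∫⁻ w, F (Y ω, w) ∂μ ∂P := by
  rw [← lintegral_map hF (hY.prodMk hZ), hYZ.map_prodMk_eq_prod hY hZ hZμ,
    lintegral_prod F hF.aemeasurable,
    lintegral_map (Measurable.lintegral_prod_right (f := fun x w => F (x, w)) hF) hY]

lemma IndepFun.integral_comp_prodMk (hY : Measurable Y) (hZ : Measurable Z)
    (hYZ : IndepFun Y Z P) (hZμ : P.map Z = μ) {F : β × Ω → ℝ} (hF : Measurable F)
    (hFi : Integrable (fun ω => F (Y ω, Z ω)) P) :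
    ∫ ω, F (Y ω, Z ω) ∂P = ∫ ω, ∫ w, F (Y ω, w) ∂μ ∂P := by
  have hmap := hYZ.map_prodMk_eq_prod hY hZ hZμ
  have hFint : Integrable F ((P.map Y).prod μ) := by
    rw [← hmap]
    exact (integrable_map_measure hF.aestronglyMeasurable (hY.prodMk hZ).aemeasurable).2 hFi
  rw [← integral_map (hY.prodMk hZ).aemeasurable hF.aestronglyMeasurable, hmap,
    integral_prod F hFint, integral_map hY.aemeasurable
      (hF.stronglyMeasurable.integral_prod_right (f := fun x w => F (x, w))).aestronglyMeasurable]

end ProbabilityTheory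

section Oracle

open ProbabilityTheory

variable {E Ω Ωp : Type*} [NormedAddCommGroup E] [InnerProductSpace ℝ E] [MeasurableSpace E]
  [MeasurableSpace Ω]

structure IsUnbiasedGradientOracle (μ : Measure Ω) (g : E → Ω → E) (gradL : E → E) (σ : ℝ) :
    Prop where
  measurable : Measurable (Function.uncurry g)
  integrable : ∀ x, Integrable (g x) μ
  integral_eq : ∀ x, ∫ ω, g x ω ∂μ = gradL x
  integrable_sq : ∀ x, Integrable (fun ω => ‖g x ω - gradL x‖ ^ 2) μ
  integral_sq_le : ∀ x, ∫ ω, ‖g x ω - gradL x‖ ^ 2 ∂μ ≤ σ ^ 2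

namespace IsUnbiasedGradientOracle

variable [BorelSpace E] [SecondCountableTopology E] [MeasurableSpace Ωp]
  {μ : Measure Ω} [IsProbabilityMeasure μ] {P : Measure Ωp} [IsProbabilityMeasure P]
  {g : E → Ω → E} {gradL : E → E} {σ : ℝ} {Θ : Ωp → E} {Z : Ωp → Ω}

lemma integrable_sq_and_integral_sq_le (hg : IsUnbiasedGradientOracle μ g gradL σ)
    (hgradL : Measurable gradL) (hΘ : Measurable Θ) (hZ : Measurable Z)
    (hΘZ : IndepFun Θ Z P) (hZμ : P.map Z = μ) :
    Integrable (fun ω => ‖g (Θ ω) (Z ω) - gradL (Θ ω)‖ ^ 2) P ∧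
      ∫ ω, ‖g (Θ ω) (Z ω) - gradL (Θ ω)‖ ^ 2 ∂P ≤ σ ^ 2 := by
  have hF : Measurable fun z : E × Ω => ‖g z.1 z.2 - gradL z.1‖ ^ 2 :=
    (hg.measurable.sub (hgradL.comp measurable_fst)).norm.pow_const 2
  have hlint : ∫⁻ ω, ENNReal.ofReal (‖g (Θ ω) (Z ω) - gradL (Θ ω)‖ ^ 2) ∂P ≤
      ENNReal.ofReal (σ ^ 2) := by
    calc ∫⁻ ω, ENNReal.ofReal (‖g (Θ ω) (Z ω) - gradL (Θ ω)‖ ^ 2) ∂P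
        = ∫⁻ ω, ∫⁻ w, ENNReal.ofReal (‖g (Θ ω) w - gradL (Θ ω)‖ ^ 2) ∂μ ∂P :=
          hΘZ.lintegral_comp_prodMk hΘ hZ hZμ (ENNReal.measurable_ofReal.comp hF)
      _ ≤ ∫⁻ _, ENNReal.ofReal (σ ^ 2) ∂P := lintegral_mono fun ω => ?_
      _ = ENNReal.ofReal (σ ^ 2) := by simp
    rw [← ofReal_integral_eq_lintegral_ofReal (hg.integrable_sq (Θ ω))
      (.of_forall fun w => sq_nonneg _)]
    exact ENNReal.ofReal_le_ofReal (hg.integral_sq_le (Θ ω))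
  have hnonneg : 0 ≤ᵐ[P] fun ω => ‖g (Θ ω) (Z ω) - gradL (Θ ω)‖ ^ 2 :=
    .of_forall fun ω => sq_nonneg _
  have hint : Integrable (fun ω => ‖g (Θ ω) (Z ω) - gradL (Θ ω)‖ ^ 2) P :=
    ⟨(hF.comp (hΘ.prodMk hZ)).aestronglyMeasurable,
      (hasFiniteIntegral_iff_ofReal hnonneg).2 (hlint.trans_lt ENNReal.ofReal_lt_top)⟩
  refine ⟨hint, ?_⟩
  rw [integral_eq_lintegral_of_nonneg_ae hnonneg hint.1]
  exact ENNReal.toReal_le_of_le_ofReal (sq_nonneg σ) hlint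

lemma integral_inner_sub_eq_zero [CompleteSpace E] (hg : IsUnbiasedGradientOracle μ g gradL σ)
    (hgradL : Measurable gradL) (hΘ : Measurable Θ) (hZ : Measurable Z)
    (hΘZ : IndepFun Θ Z P) (hZμ : P.map Z = μ) {h : E → E} (hh : Measurable h)
    (hint : Integrable (fun ω => ⟪g (Θ ω) (Z ω) - gradL (Θ ω), h (Θ ω)⟫) P) :
    ∫ ω, ⟪g (Θ ω) (Z ω) - gradL (Θ ω), h (Θ ω)⟫ ∂P = 0 := by
  have hF : Measurable fun z : E × Ω => ⟪g z.1 z.2 - gradL z.1, h z.1⟫ :=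
    (hg.measurable.sub (hgradL.comp measurable_fst)).inner (hh.comp measurable_fst)
  have hzero : ∀ x, ∫ w, ⟪g x w - gradL x, h x⟫ ∂μ = 0 := fun x => by
    simp_rw [real_inner_comm (h x)]
    rw [integral_inner (f := fun w => g x w - gradL x) ((hg.integrable x).sub (integrable_const _)),
      integral_sub (hg.integrable x) (integrable_const _), hg.integral_eq, integral_const,
      probReal_univ, one_smul, sub_self, inner_zero_right]
  exact (hΘZ.integral_comp_prodMk hΘ hZ hZμ hF hint).trans (by simp only [hzero, integral_zero])

lemma integrable_inner_and_integral_inner_le [CompleteSpace E]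
    (hg : IsUnbiasedGradientOracle μ g gradL σ)
    (hgradL : Measurable gradL) (hΘ : Measurable Θ) (hZ : Measurable Z)
    (hΘZ : IndepFun Θ Z P) (hZμ : P.map Z = μ) {θbar : E} {L μc : ℝ}
    (hgrad_le : ∀ x, ‖gradL x‖ ≤ L * ‖θbar - x‖)
    (hgrad_inner : ∀ x, ⟪gradL x, θbar - x⟫ ≤ -(μc / 2) * ‖θbar - x‖ ^ 2)
    (hsq : Integrable (fun ω => ‖θbar - Θ ω‖ ^ 2) P) :
    Integrable (fun ω => ⟪g (Θ ω) (Z ω), θbar - Θ ω⟫) P ∧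
      ∫ ω, ⟪g (Θ ω) (Z ω), θbar - Θ ω⟫ ∂P ≤ -(μc / 2) * ∫ ω, ‖θbar - Θ ω‖ ^ 2 ∂P := by
  have hvar := (hg.integrable_sq_and_integral_sq_le hgradL hΘ hZ hΘZ hZμ).1
  have hG : Measurable fun ω => g (Θ ω) (Z ω) := hg.measurable.comp (hΘ.prodMk hZ)
  have hnoise : Integrable (fun ω => ⟪g (Θ ω) (Z ω) - gradL (Θ ω), θbar - Θ ω⟫) P :=
    ((hvar.add hsq).div_const 2).mono'
      ((hG.sub (hgradL.comp hΘ)).inner (measurable_const.sub hΘ)).aestronglyMeasurable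
      (.of_forall fun ω => abs_real_inner_le_add_sq_div_two _ _)
  have hdrift : Integrable (fun ω => ⟪gradL (Θ ω), θbar - Θ ω⟫) P :=
    (hsq.const_mul L).mono' ((hgradL.comp hΘ).inner (measurable_const.sub hΘ)).aestronglyMeasurable
      (.of_forall fun ω => (abs_real_inner_le_norm _ _).trans <| by
        nlinarith [hgrad_le (Θ ω), norm_nonneg (θbar - Θ ω)])
  have hsplit : ∀ ω, ⟪g (Θ ω) (Z ω), θbar - Θ ω⟫ =
      ⟪g (Θ ω) (Z ω) - gradL (Θ ω), θbar - Θ ω⟫ + ⟪gradL (Θ ω), θbar - Θ ω⟫ := fun ω => by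
    rw [inner_sub_left, sub_add_cancel]
  simp_rw [hsplit]
  refine ⟨hnoise.add hdrift, ?_⟩
  have hnoise_zero : ∫ ω, ⟪g (Θ ω) (Z ω) - gradL (Θ ω), θbar - Θ ω⟫ ∂P = 0 :=
    hg.integral_inner_sub_eq_zero hgradL hΘ hZ hΘZ hZμ (h := fun x => θbar - x)
      (measurable_const.sub measurable_id) hnoise
  rw [integral_add hnoise hdrift, ← integral_const_mul, hnoise_zero, zero_add]
  exact integral_mono hdrift (hsq.const_mul _) fun ω => hgrad_inner (Θ ω)

lemma integrable_sq_norm_and_integral_sq_norm_le (hg : IsUnbiasedGradientOracle μ g gradL σ)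
    (hgradL : Measurable gradL) (hΘ : Measurable Θ) (hZ : Measurable Z)
    (hΘZ : IndepFun Θ Z P) (hZμ : P.map Z = μ) {θbar : E} {L : ℝ}
    (hgrad_le : ∀ x, ‖gradL x‖ ≤ L * ‖θbar - x‖)
    (hsq : Integrable (fun ω => ‖θbar - Θ ω‖ ^ 2) P) :
    Integrable (fun ω => ‖g (Θ ω) (Z ω)‖ ^ 2) P ∧
      ∫ ω, ‖g (Θ ω) (Z ω)‖ ^ 2 ∂P ≤ 3 * σ ^ 2 + 3 / 2 * L ^ 2 * ∫ ω, ‖θbar - Θ ω‖ ^ 2 ∂P := by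
  obtain ⟨hvar, hvar_le⟩ := hg.integrable_sq_and_integral_sq_le hgradL hΘ hZ hΘZ hZμ
  have hbound : Integrable (fun ω => 3 * ‖g (Θ ω) (Z ω) - gradL (Θ ω)‖ ^ 2 +
      3 / 2 * L ^ 2 * ‖θbar - Θ ω‖ ^ 2) P :=
    (hvar.const_mul 3).add (hsq.const_mul _)
  have hle : ∀ ω, ‖g (Θ ω) (Z ω)‖ ^ 2 ≤
      3 * ‖g (Θ ω) (Z ω) - gradL (Θ ω)‖ ^ 2 + 3 / 2 * L ^ 2 * ‖θbar - Θ ω‖ ^ 2 := fun ω => by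
    have hgrad_sq : ‖gradL (Θ ω)‖ ^ 2 ≤ L ^ 2 * ‖θbar - Θ ω‖ ^ 2 := by
      rw [← mul_pow]
      exact pow_le_pow_left₀ (norm_nonneg _) (hgrad_le (Θ ω)) 2
    have := norm_add_sq_le_three_mul (g (Θ ω) (Z ω) - gradL (Θ ω)) (gradL (Θ ω))
    rw [sub_add_cancel] at this
    linarith
  have hint : Integrable (fun ω => ‖g (Θ ω) (Z ω)‖ ^ 2) P :=
    hbound.mono' ((hg.measurable.comp (hΘ.prodMk hZ)).norm.pow_const 2).aestronglyMeasurable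
      (.of_forall fun ω => by rw [Real.norm_of_nonneg (sq_nonneg _)]; exact hle ω)
  refine ⟨hint, (integral_mono hint hbound hle).trans ?_⟩
  rw [integral_add (hvar.const_mul 3) (hsq.const_mul _), integral_const_mul, integral_const_mul]
  linarith

end IsUnbiasedGradientOracle

end Oracle

section Descent

open ProbabilityTheory

variable {E Ω Ωp : Type*} [NormedAddCommGroup E] [InnerProductSpace ℝ E] [CompleteSpace E]
  [MeasurableSpace E] [BorelSpace E] [SecondCountableTopology E]
  [MeasurableSpace Ω] [MeasurableSpace Ωp] {μ : Measure Ω} [IsProbabilityMeasure μ]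
  {P : Measure Ωp} [IsProbabilityMeasure P]

lemma integral_DBreg_elasticNet_step_le {J : E → ℝ} {δ : ℝ} (hδ : 0 < δ) {g : E → Ω → E}
    {gradL : E → E} {σ : ℝ} (hg : IsUnbiasedGradientOracle μ g gradL σ)
    (hgradL : Measurable gradL) {θbar : E} {L μc τ : ℝ}
    (hgrad_le : ∀ x, ‖gradL x‖ ≤ L * ‖θbar - x‖)
    (hgrad_inner : ∀ x, ⟪gradL x, θbar - x⟫ ≤ -(μc / 2) * ‖θbar - x‖ ^ 2)
    (hτ : 0 ≤ τ) (hτL : 2 * δ * L ^ 2 * τ ≤ μc)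
    {Θ Θ' V V' : Ωp → E} {Z : Ωp → Ω} (hΘ : Measurable Θ) (hZ : Measurable Z)
    (hΘZ : IndepFun Θ Z P) (hZμ : P.map Z = μ)
    (hsub : ∀ ω, ESubgradAt ((↑) ∘ J) (V ω - δ⁻¹ • Θ ω) (Θ ω))
    (hV' : ∀ ω, V' ω = V ω - τ • g (Θ ω) (Z ω))
    (hD : Integrable (fun ω => DBreg (elasticNet ((↑) ∘ J) δ) (V ω) θbar (Θ ω)) P)
    (hD' : Integrable (fun ω => DBreg (elasticNet ((↑) ∘ J) δ) (V' ω) θbar (Θ' ω)) P)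
    (hsq : Integrable (fun ω => ‖θbar - Θ ω‖ ^ 2) P) :
    ∫ ω, DBreg (elasticNet ((↑) ∘ J) δ) (V' ω) θbar (Θ' ω) ∂P ≤
      ∫ ω, DBreg (elasticNet ((↑) ∘ J) δ) (V ω) θbar (Θ ω) ∂P -
        μc / 8 * (τ * ∫ ω, ‖θbar - Θ ω‖ ^ 2 ∂P) + 3 * δ * σ ^ 2 / 2 * τ ^ 2 := by
  obtain rfl : V' = fun ω => V ω - τ • g (Θ ω) (Z ω) := funext hV'
  obtain ⟨hinner, hinner_le⟩ :=
    hg.integrable_inner_and_integral_inner_le hgradL hΘ hZ hΘZ hZμ hgrad_le hgrad_inner hsq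
  obtain ⟨hG, hG_le⟩ :=
    hg.integrable_sq_norm_and_integral_sq_norm_le hgradL hΘ hZ hΘZ hZμ hgrad_le hsq
  have ha : 0 ≤ ∫ ω, ‖θbar - Θ ω‖ ^ 2 ∂P := integral_nonneg fun ω => sq_nonneg _
  have hdrift := mul_le_mul_of_nonneg_left hinner_le hτ
  have hnoise := mul_le_mul_of_nonneg_left hG_le (by positivity : 0 ≤ δ * τ ^ 2 / 2)
  -- by `hτL`, the noise term eats at most `3 / 4` of the drift `-(μc / 2) * τ * a`
  have hstep := mul_le_mul_of_nonneg_right hτL (mul_nonneg hτ ha)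
  have hDτ : Integrable (fun ω => DBreg (elasticNet ((↑) ∘ J) δ) (V ω) θbar (Θ ω) +
      τ * ⟪g (Θ ω) (Z ω), θbar - Θ ω⟫) P := hD.add (hinner.const_mul τ)
  calc ∫ ω, DBreg (elasticNet ((↑) ∘ J) δ) (V ω - τ • g (Θ ω) (Z ω)) θbar (Θ' ω) ∂P
      ≤ ∫ ω, (DBreg (elasticNet ((↑) ∘ J) δ) (V ω) θbar (Θ ω) +
          τ * ⟪g (Θ ω) (Z ω), θbar - Θ ω⟫ + δ * τ ^ 2 / 2 * ‖g (Θ ω) (Z ω)‖ ^ 2) ∂P :=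
        integral_mono hD' (hDτ.add (hG.const_mul _))
          fun ω => DBreg_elasticNet_step_le hδ (hsub ω) θbar (Θ' ω) (g (Θ ω) (Z ω)) τ
    _ = ∫ ω, DBreg (elasticNet ((↑) ∘ J) δ) (V ω) θbar (Θ ω) ∂P +
          τ * ∫ ω, ⟪g (Θ ω) (Z ω), θbar - Θ ω⟫ ∂P +
            δ * τ ^ 2 / 2 * ∫ ω, ‖g (Θ ω) (Z ω)‖ ^ 2 ∂P := by
        rw [integral_add hDτ (hG.const_mul _),
          integral_add hD (hinner.const_mul τ), integral_const_mul, integral_const_mul]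
    _ ≤ _ := by linarith

end Descent

section ExpectedBounds

variable {Ωp : Type*} [MeasurableSpace Ωp] {P : Measure Ωp}

lemma integral_sq_norm_le_two_mul_integral_DBreg {E : Type*} [NormedAddCommGroup E]
    [InnerProductSpace ℝ E] {J : E → ℝ} {δ : ℝ} (hδ : 0 < δ) {Θ V : Ωp → E} {θbar : E}
    (hsub : ∀ ω, ESubgradAt ((↑) ∘ J) (V ω - δ⁻¹ • Θ ω) (Θ ω))
    (hsq : Integrable (fun ω => ‖θbar - Θ ω‖ ^ 2) P)
    (hD : Integrable (fun ω => DBreg (elasticNet ((↑) ∘ J) δ) (V ω) θbar (Θ ω)) P) :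
    ∫ ω, ‖θbar - Θ ω‖ ^ 2 ∂P ≤ 2 * δ * ∫ ω, DBreg (elasticNet ((↑) ∘ J) δ) (V ω) θbar (Θ ω) ∂P := by
  rw [← integral_const_mul]
  refine integral_mono hsq (hD.const_mul _) fun ω => ?_
  have := sq_norm_div_le_DBreg_elasticNet hδ (hsub ω) θbar
  rwa [div_le_iff₀' (by positivity)] at this

lemma integral_DBreg_elasticNet_l1Norm_le [IsProbabilityMeasure P] {n : ℕ} {δ ε : ℝ}
    (hδ : 0 < δ) (hε : 0 < ε) {Θ V : Ωp → EuclideanSpace ℝ (Fin n)}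
    {θbar : EuclideanSpace ℝ (Fin n)}
    (hsub : ∀ ω, ESubgradAt ((↑) ∘ l1Norm) (V ω - δ⁻¹ • Θ ω) (Θ ω))
    (hD : Integrable (fun ω => DBreg (elasticNet ((↑) ∘ l1Norm) δ) (V ω) θbar (Θ ω)) P)
    (hsq : Integrable (fun ω => ‖θbar - Θ ω‖ ^ 2) P) :
    ∫ ω, DBreg (elasticNet ((↑) ∘ l1Norm) δ) (V ω) θbar (Θ ω) ∂P ≤
      ε + (n / ε + 1 / (2 * δ)) * ∫ ω, ‖θbar - Θ ω‖ ^ 2 ∂P := by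
  have hM := hsq.const_mul (n / ε + 1 / (2 * δ))
  calc _ ≤ ∫ ω, (ε + (n / ε + 1 / (2 * δ)) * ‖θbar - Θ ω‖ ^ 2) ∂P :=
        integral_mono hD ((integrable_const ε).add hM)
          fun ω => DBreg_elasticNet_l1Norm_le hδ hε (hsub ω) θbar
    _ = _ := by
        rw [integral_add (integrable_const ε) hM, integral_const_mul, integral_const,
          probReal_univ, one_smul]

end ExpectedBounds

lemma HasGradientAt.eq_zero_of_isLocalMin {E : Type*} [NormedAddCommGroup E]
    [InnerProductSpace ℝ E] [CompleteSpace E] {f : E → ℝ} {f' a : E} (hf : HasGradientAt f f' a)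
    (h : IsLocalMin f a) : f' = 0 :=
  (InnerProductSpace.toDual ℝ E).map_eq_zero_iff.1 (h.hasFDerivAt_eq_zero hf.hasFDerivAt)

theorem stochastic_linBreg_convergence_finite_dim_general
    (N : ℕ)
    {Ω : Type*} [MeasurableSpace Ω] (μ : Measure Ω) [IsProbabilityMeasure μ]
    {Ωp : Type*} [MeasurableSpace Ωp] (P : Measure Ωp) [IsProbabilityMeasure P]
    (X : ℕ → Ωp → Ω) (hXmeas : ∀ k, Measurable (X k))
    (hXindep : ProbabilityTheory.iIndepFun X P)
    (hXdist : ∀ k, Measure.map (X k) P = μ)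
    (𝓛 : EuclideanSpace ℝ (Fin N) → ℝ) (gradL : EuclideanSpace ℝ (Fin N) → EuclideanSpace ℝ (Fin N))
    (hgrad : ∀ x, HasGradientAt 𝓛 (gradL x) x)
    (L : ℝ) (hL : 0 < L) (hLip : ∀ x y, ‖gradL x - gradL y‖ ≤ L * ‖x - y‖)
    (g : EuclideanSpace ℝ (Fin N) → Ω → EuclideanSpace ℝ (Fin N))
    (hgmeas : Measurable (Function.uncurry g))
    (hgint : ∀ x, Integrable (g x) μ)
    (hunbiased : ∀ x, ∫ ω, g x ω ∂μ = gradL x)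
    (σ : ℝ)
    (hvarint : ∀ x, Integrable (fun ω => ‖g x ω - gradL x‖ ^ 2) μ)
    (hvar : ∀ x, ∫ ω, ‖g x ω - gradL x‖ ^ 2 ∂μ ≤ σ ^ 2)
    (δ : ℝ) (hδ : 0 < δ)
    (J : EuclideanSpace ℝ (Fin N) → EReal)
    (hJ : ∀ x, J x = ((∑ i, |x i| : ℝ) : EReal))
    (μc : ℝ) (hμc : 0 < μc)
    (hstrconv : ∀ x y, 𝓛 x + ⟪gradL x, y - x⟫ + μc / 2 * ‖y - x‖ ^ 2 ≤ 𝓛 y)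
    (θstar : EuclideanSpace ℝ (Fin N)) (hθstar : ∀ x, 𝓛 θstar ≤ 𝓛 x)
    (τ : ℕ → ℝ) (hτpos : ∀ k, 0 < τ k)
    (θ v : ℕ → Ωp → EuclideanSpace ℝ (Fin N))
    (hθmeas : ∀ k, Measurable (θ k))
    (θ0 v0 : EuclideanSpace ℝ (Fin N)) (hθ0 : ∀ ω, θ 0 ω = θ0) (hv0 : ∀ ω, v 0 ω = v0)
    (hsub0 : ESubgradAt (elasticNet J δ) v0 θ0)
    (hvrec : ∀ k ω, v (k + 1) ω = v k ω - τ k • g (θ k ω) (X k ω))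
    (hθrec : ∀ k ω, ∀ t : EuclideanSpace ℝ (Fin N),
      ((‖θ (k + 1) ω - δ • v (k + 1) ω‖ ^ 2 / (2 * δ) : ℝ) : EReal) + J (θ (k + 1) ω)
        ≤ ((‖t - δ • v (k + 1) ω‖ ^ 2 / (2 * δ) : ℝ) : EReal) + J t)
    (hdint : ∀ k, Integrable (fun ω => DBreg (elasticNet J δ) (v k ω) θstar (θ k ω)) P)
    (hN2int : ∀ k, Integrable (fun ω => ‖θstar - θ k ω‖ ^ 2) P)
    (hτle : ∀ k, τ k ≤ μc / (2 * δ * L ^ 2))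
    (hτsq : Summable (fun k => (τ k) ^ 2))
    (hτns : ¬ Summable τ) :
    Tendsto (fun k => ∫ ω, DBreg (elasticNet J δ) (v k ω) θstar (θ k ω) ∂P)
      atTop (nhds 0) ∧
    Tendsto (fun k => ∫ ω, ‖θstar - θ k ω‖ ^ 2 ∂P) atTop (nhds 0) := by
  obtain rfl : J = (↑) ∘ l1Norm := funext hJ
  have hθv : ∀ k ω, θ k ω = δ • shrink (v k ω) := by
    rintro (_ | k) ω <;> refine eq_smul_shrink_of_isMinOn hδ ?_
    · rw [hθ0, hv0]
      exact (eSubgradAt_elasticNet_iff_isMinOn hδ).1 hsub0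
    · refine isMinOn_univ_iff.2 fun t => ?_
      simpa only [Function.comp_apply, ← EReal.coe_add, EReal.coe_le_coe_iff] using hθrec k ω t
  have hsub : ∀ k ω, ESubgradAt ((↑) ∘ l1Norm) (v k ω - δ⁻¹ • θ k ω) (θ k ω) := fun k ω =>
    hθv k ω ▸ eSubgradAt_l1Norm_smul_shrink hδ (v k ω)
  have hind := hXindep.indepFun_of_mirror_recursion hXmeas hgmeas
    (continuous_shrink.measurable.const_smul δ) hv0 hvrec hθv
  have hgradL : Measurable gradL := (LipschitzWith.of_dist_le' (K := L)
    (by simpa only [dist_eq_norm] using hLip)).continuous.measurable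
  have hgrad_le : ∀ x, ‖gradL x‖ ≤ L * ‖θstar - x‖ := fun x => by
    simpa [(hgrad θstar).eq_zero_of_isLocalMin (.of_forall hθstar), norm_sub_rev] using
      hLip x θstar
  have hgrad_inner : ∀ x, ⟪gradL x, θstar - x⟫ ≤ -(μc / 2) * ‖θstar - x‖ ^ 2 := fun x => by
    linarith [hstrconv x θstar, hθstar x]
  have hτL : ∀ k, 2 * δ * L ^ 2 * τ k ≤ μc := fun k => by
    rw [← le_div_iff₀' (by positivity)]
    exact hτle k
  set d := fun k => ∫ ω, DBreg (elasticNet ((↑) ∘ l1Norm) δ) (v k ω) θstar (θ k ω) ∂P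
  set a := fun k => ∫ ω, ‖θstar - θ k ω‖ ^ 2 ∂P
  have hrec : ∀ k, d (k + 1) ≤ d k - μc / 8 * (τ k * a k) + 3 * δ * σ ^ 2 / 2 * τ k ^ 2 :=
    fun k => integral_DBreg_elasticNet_step_le hδ ⟨hgmeas, hgint, hunbiased, hvarint, hvar⟩
      hgradL hgrad_le hgrad_inner (hτpos k).le (hτL k) (hθmeas k) (hXmeas k) (hind k)
      (hXdist k) (hsub k) (hvrec k) (hdint k) (hdint (k + 1)) (hN2int k)
  have ha : ∀ k, 0 ≤ a k := fun k => integral_nonneg fun ω => sq_nonneg _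
  have ha_le : ∀ k, a k ≤ 2 * δ * d k := fun k =>
    integral_sq_norm_le_two_mul_integral_DBreg hδ (hsub k) (hN2int k) (hdint k)
  have hd : Tendsto d atTop (𝓝 0) :=
    tendsto_zero_of_le_sub_mul_add_sq (by positivity) (by positivity)
      (fun k => nonneg_of_mul_nonneg_right ((ha k).trans (ha_le k)) (by positivity)) ha
      (fun k => (hτpos k).le) hτsq hτns hrec fun ε hε => ⟨_, fun k =>
        integral_DBreg_elasticNet_l1Norm_le hδ hε (hsub k) (hdint k) (hN2int k)⟩
  exact ⟨hd, squeeze_zero ha ha_le (by simpa using hd.const_mul (2 * δ))⟩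

/-- **Convergence in finite dimensions with `ℓ¹` regularization:** the whole sequence of
Bregman distances to the minimizer, and hence the mean squared distance, converges to zero. -/
theorem stochastic_linBreg_convergence_finite_dim
    (N : ℕ)
    {Ω : Type*} [MeasurableSpace Ω] (μ : Measure Ω) [IsProbabilityMeasure μ]
    {Ωp : Type*} [MeasurableSpace Ωp] (P : Measure Ωp) [IsProbabilityMeasure P]
    (X : ℕ → Ωp → Ω) (hXmeas : ∀ k, Measurable (X k))
    (hXindep : ProbabilityTheory.iIndepFun X P)
    (hXdist : ∀ k, Measure.map (X k) P = μ)
    (𝓛 : EuclideanSpace ℝ (Fin N) → ℝ) (gradL : EuclideanSpace ℝ (Fin N) → EuclideanSpace ℝ (Fin N))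
    (hgrad : ∀ x, HasGradientAt 𝓛 (gradL x) x)
    (hLnonneg : ∀ x, 0 ≤ 𝓛 x)
    (L : ℝ) (hL : 0 < L) (hLip : ∀ x y, ‖gradL x - gradL y‖ ≤ L * ‖x - y‖)
    (g : EuclideanSpace ℝ (Fin N) → Ω → EuclideanSpace ℝ (Fin N))
    (hgmeas : Measurable (Function.uncurry g))
    (hgint : ∀ x, Integrable (g x) μ)
    (hunbiased : ∀ x, ∫ ω, g x ω ∂μ = gradL x)
    (σ : ℝ) (hσ : 0 ≤ σ)
    (hvarint : ∀ x, Integrable (fun ω => ‖g x ω - gradL x‖ ^ 2) μ)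
    (hvar : ∀ x, ∫ ω, ‖g x ω - gradL x‖ ^ 2 ∂μ ≤ σ ^ 2)
    (δ : ℝ) (hδ : 0 < δ)
    (J : EuclideanSpace ℝ (Fin N) → EReal)
    (hJ : ∀ x, J x = ((∑ i, |x i| : ℝ) : EReal))
    (μc : ℝ) (hμc : 0 < μc)
    (hstrconv : ∀ x y, 𝓛 x + ⟪gradL x, y - x⟫ + μc / 2 * ‖y - x‖ ^ 2 ≤ 𝓛 y)
    (θstar : EuclideanSpace ℝ (Fin N)) (hθstar : ∀ x, 𝓛 θstar ≤ 𝓛 x)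
    (τ : ℕ → ℝ) (hτpos : ∀ k, 0 < τ k)
    (θ v : ℕ → Ωp → EuclideanSpace ℝ (Fin N))
    (hθmeas : ∀ k, Measurable (θ k)) (hvmeas : ∀ k, Measurable (v k))
    (θ0 v0 : EuclideanSpace ℝ (Fin N)) (hθ0 : ∀ ω, θ 0 ω = θ0) (hv0 : ∀ ω, v 0 ω = v0)
    (hsub0 : ESubgradAt (elasticNet J δ) v0 θ0)
    (hvrec : ∀ k ω, v (k + 1) ω = v k ω - τ k • g (θ k ω) (X k ω))
    (hθrec : ∀ k ω, ∀ t : EuclideanSpace ℝ (Fin N),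
      ((‖θ (k + 1) ω - δ • v (k + 1) ω‖ ^ 2 / (2 * δ) : ℝ) : EReal) + J (θ (k + 1) ω)
        ≤ ((‖t - δ • v (k + 1) ω‖ ^ 2 / (2 * δ) : ℝ) : EReal) + J t)
    (hLint : ∀ k, Integrable (fun ω => 𝓛 (θ k ω)) P)
    (hDint : ∀ k, Integrable (fun ω =>
      DBregSym J (v k ω - δ⁻¹ • θ k ω) (v (k + 1) ω - δ⁻¹ • θ (k + 1) ω)
        (θ (k + 1) ω) (θ k ω)) P)
    (hNint : ∀ k, Integrable (fun ω => ‖θ (k + 1) ω - θ k ω‖ ^ 2) P)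
    (hdint : ∀ k, Integrable (fun ω => DBreg (elasticNet J δ) (v k ω) θstar (θ k ω)) P)
    (hN2int : ∀ k, Integrable (fun ω => ‖θstar - θ k ω‖ ^ 2) P)
    (hτle : ∀ k, τ k ≤ μc / (2 * δ * L ^ 2))
    (hτmono : ∀ k, τ (k + 1) ≤ τ k) (hτsq : Summable (fun k => (τ k) ^ 2))
    (hτns : ¬ Summable τ) :
    Tendsto (fun k => ∫ ω, DBreg (elasticNet J δ) (v k ω) θstar (θ k ω) ∂P)
      atTop (nhds 0) ∧
    Tendsto (fun k => ∫ ω, ‖θstar - θ k ω‖ ^ 2 ∂P) atTop (nhds 0) :=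
  stochastic_linBreg_convergence_finite_dim_general N μ P X hXmeas hXindep hXdist 𝓛 gradL hgrad L hL
    hLip g hgmeas hgint hunbiased σ hvarint hvar δ hδ J hJ μc hμc hstrconv θstar hθstar τ hτpos θ v
    hθmeas θ0 v0 hθ0 hv0 hsub0 hvrec hθrec hdint hN2int hτle hτsq hτns
end
end

section
/- Non-convergence to a critical point: let 𝓛(θ) = (θ + 1)² on ℝ, let J = χ_{[0,∞)} be the characteristic function of the nonnegative half-line (J(θ) = 0 for θ ≥ 0 and J(θ) = +∞ for θ < 0), and let δ > 0 and τ > 0 be arbitrary. Consider the deterministic linearized Bregman iterations: θ^(k) := max(δ v^(k), 0) (the proximal step, which here is projection onto [0, ∞)) and v^(k+1) := v^(k) − τ 𝓛′(θ^(k)) = v^(k) − 2τ(θ^(k) + 1), started from any v^(0) ∈ ℝ. Then θ^(k) → 0 as k → ∞ (indeed θ^(k) = 0 for all sufficiently large k), although θ = 0 is not a critical point of 𝓛; the only critical point θ* = −1 satisfies J(θ*) = +∞. -/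
open Filter

theorem tendsto_atBot_of_le_sub_const {α : Type*} [Field α] [LinearOrder α]
    [IsStrictOrderedRing α] [Archimedean α] {v : ℕ → α} {c : α} (hc : 0 < c)
    (hv : ∀ k, v (k + 1) ≤ v k - c) : Tendsto v atTop atBot := by
  have hle : ∀ k : ℕ, v k ≤ v 0 + -(k * c) := by
    intro k
    induction k with
    | zero => simp
    | succ k ih => push_cast; linarith [hv k]
  refine tendsto_atBot_mono hle (tendsto_atBot_add_const_left _ _ ?_)
  exact tendsto_neg_atTop_atBot.comp (tendsto_natCast_atTop_atTop.atTop_mul_const hc)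

/-- The dual variable is pushed to `-∞`, so its projection onto `[0, ∞)` is eventually `0`. -/
theorem eventually_linBreg_proj_eq_zero {g : ℝ → ℝ} {c δ τ : ℝ} {v θ : ℕ → ℝ}
    (hc : 0 < c) (hg : ∀ x, 0 ≤ x → c ≤ g x) (hδ : 0 ≤ δ) (hτ : 0 < τ)
    (hθ : ∀ k, θ k = max (δ * v k) 0) (hv : ∀ k, v (k + 1) = v k - τ * g (θ k)) :
    ∀ᶠ k in atTop, θ k = 0 := by
  have hstep : ∀ k, v (k + 1) ≤ v k - τ * c := fun k => by
    have hθ_nonneg : 0 ≤ θ k := (hθ k).symm ▸ le_max_right _ _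
    rw [hv]
    nlinarith [hg _ hθ_nonneg]
  filter_upwards [(tendsto_atBot_of_le_sub_const (mul_pos hτ hc) hstep).eventually_le_atBot 0]
    with k hk
  rw [hθ, max_eq_right (mul_nonpos_of_nonneg_of_nonpos hδ hk)]

/-- **Non-convergence to a critical point.** -/
theorem linBreg_nonconvergence_to_critical_point
    (𝓛 : ℝ → ℝ) (h𝓛 : ∀ x, 𝓛 x = (x + 1) ^ 2)
    (J : ℝ → EReal) (hJ : ∀ x : ℝ, J x = if 0 ≤ x then (0 : EReal) else ⊤)
    (δ τ : ℝ) (hδ : 0 < δ) (hτ : 0 < τ)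
    (v θ : ℕ → ℝ)
    (hθ : ∀ k, θ k = max (δ * v k) 0)
    (hv : ∀ k, v (k + 1) = v k - 2 * τ * (θ k + 1)) :
    Tendsto θ atTop (nhds 0) ∧
    (∃ K : ℕ, ∀ k ≥ K, θ k = 0) ∧
    deriv 𝓛 0 ≠ 0 ∧
    (∀ x : ℝ, deriv 𝓛 x = 0 → x = -1) ∧
    J (-1) = ⊤ := by
  have hderiv : ∀ x, deriv 𝓛 x = 2 * (x + 1) := by
    intro x
    simp [funext h𝓛]
  have hzero : ∀ᶠ k in atTop, θ k = 0 :=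
    eventually_linBreg_proj_eq_zero (g := deriv 𝓛) two_pos
      (fun x hx => by linarith [hderiv x]) hδ.le hτ hθ (fun k => by rw [hv, hderiv]; ring)
  refine ⟨tendsto_const_nhds.congr' (hzero.mono fun _ h => h.symm), eventually_atTop.1 hzero,
    ?_, fun x hx => ?_, ?_⟩
  · norm_num [hderiv]
  · linarith [hderiv x]
  · simp [hJ]
end

section
/- Deterministic loss decay for linearized Bregman iterations: let Θ be a real Hilbert space, 𝓛 : Θ → ℝ Fréchet differentiable and bounded below with ∇𝓛 L-Lipschitz (L > 0), J : Θ → (−∞, ∞] convex, proper and lower semicontinuous, δ > 0, and step sizes τ^(k) > 0. Define the deterministic linearized Bregman iterates from an initial pair θ^(0), v^(0) with v^(0) ∈ ∂J_δ(θ^(0)) by v^(k+1) := v^(k) − τ^(k) ∇𝓛(θ^(k)), and θ^(k+1) the unique minimizer over θ of (1/(2δ))‖θ − δ v^(k+1)‖² + J(θ). Then for every k: 𝓛(θ^(k+1)) + (1/τ^(k)) D_J^sym(θ^(k+1), θ^(k)) + ((2 − Lδτ^(k))/(2δτ^(k))) ‖θ^(k+1) − θ^(k)‖² ≤ 𝓛(θ^(k)),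 where the symmetric Bregman distance is taken with respect to the subgradients p^(k) := v^(k) − (1/δ)θ^(k) ∈ ∂J(θ^(k)) and p^(k+1) := v^(k+1) − (1/δ)θ^(k+1) ∈ ∂J(θ^(k+1)). In particular, if τ^(k) ≤ 2/(δL) for all k, then the loss decreases monotonically: 𝓛(θ^(k+1)) ≤ 𝓛(θ^(k)). -/
open MeasureTheory Filter
open scoped RealInnerProductSpace ENNReal Topology

noncomputable section

/-!
The symmetric Bregman distance of consecutive iterates is `⟪p⁽ᵏ⁺¹⁾ - p⁽ᵏ⁾, θ⁽ᵏ⁺¹⁾ - θ⁽ᵏ⁾⟫`, and the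
update rule evaluates this inner product to
`-τ⁽ᵏ⁾ ⟪∇𝓛(θ⁽ᵏ⁾), θ⁽ᵏ⁺¹⁾ - θ⁽ᵏ⁾⟫ - ‖θ⁽ᵏ⁺¹⁾ - θ⁽ᵏ⁾‖² / δ`. Substituting this into the descent lemma
`𝓛(y) ≤ 𝓛(x) + ⟪∇𝓛(x), y - x⟫ + L/2 ‖y - x‖²` gives the decay estimate.
For monotonicity, the minimality of `θ⁽ᵏ⁺¹⁾` says that `v⁽ᵏ⁺¹⁾ ∈ ∂J_δ(θ⁽ᵏ⁺¹⁾)`; as `J` is convex,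
this upgrades to `p⁽ᵏ⁺¹⁾ ∈ ∂J(θ⁽ᵏ⁺¹⁾)`, so the symmetric Bregman distance is nonnegative by
monotonicity of `∂J`.
-/

theorem EReal.ne_top_of_add_coe_le {a b : EReal} {r s : ℝ} (h : a + r ≤ b + s) (hb : b ≠ ⊤) :
    a ≠ ⊤ := by
  rintro rfl
  rw [EReal.top_add_of_ne_bot (EReal.coe_ne_bot r)] at h
  exact (EReal.add_lt_top hb (EReal.coe_ne_top s)).not_ge h

theorem EReal.add_coe_le_add_coe_of_sub_eq {a b : EReal} {r s r' s' : ℝ}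
    (h : a + r ≤ b + s) (hsub : r' - s' = r - s) : a + r' ≤ b + s' := by
  have ha : a + r' = a + r + ((r' - r : ℝ) : EReal) := by
    rw [add_assoc, ← EReal.coe_add, add_sub_cancel]
  have hb : b + s' = b + s + ((s' - s : ℝ) : EReal) := by
    rw [add_assoc, ← EReal.coe_add, add_sub_cancel]
  rw [ha, hb, show r' - r = s' - s by linarith]
  gcongr

section

variable {Θ : Type*} [NormedAddCommGroup Θ] [InnerProductSpace ℝ Θ]

theorem descent_lemma [CompleteSpace Θ] {f : Θ → ℝ} {f' : Θ → Θ} {L : ℝ}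
    (hf : ∀ x, HasGradientAt f (f' x) x) (hLip : ∀ x y, ‖f' x - f' y‖ ≤ L * ‖x - y‖)
    (x y : Θ) : f y ≤ f x + ⟪f' x, y - x⟫ + L / 2 * ‖y - x‖ ^ 2 := by
  set d := y - x
  have hline : ∀ t : ℝ, HasDerivAt (fun t : ℝ => f (x + t • d)) ⟪f' (x + t • d), d⟫ t := by
    intro t
    have hx : HasDerivAt (fun t : ℝ => x + t • d) d t := by
      simpa using ((hasDerivAt_id t).smul_const d).const_add x
    simpa [InnerProductSpace.toDual_apply_apply, Function.comp_def] using
      (hf (x + t • d)).hasFDerivAt.comp_hasDerivAt t hx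
  set φ : ℝ → ℝ := fun t => f (x + t • d) - t * ⟪f' x, d⟫ - t ^ 2 * (L / 2 * ‖d‖ ^ 2)
  have hφ : ∀ t : ℝ, HasDerivAt φ (⟪f' (x + t • d), d⟫ - ⟪f' x, d⟫ - t * (L * ‖d‖ ^ 2)) t := by
    intro t
    refine (((hline t).sub ((hasDerivAt_id t).mul_const ⟪f' x, d⟫)).sub
      ((hasDerivAt_pow 2 t).mul_const (L / 2 * ‖d‖ ^ 2))).congr_deriv ?_
    simp only [Nat.cast_ofNat]
    ring
  have hanti : AntitoneOn φ (Set.Icc 0 1) := by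
    refine antitoneOn_of_deriv_nonpos (convex_Icc 0 1)
      (fun t _ => (hφ t).continuousAt.continuousWithinAt)
      (fun t _ => (hφ t).differentiableAt.differentiableWithinAt) fun t ht => ?_
    rw [interior_Icc] at ht
    have hlip : ‖f' (x + t • d) - f' x‖ ≤ L * (t * ‖d‖) := by
      simpa [norm_smul, abs_of_pos ht.1] using hLip (x + t • d) x
    have hcs := real_inner_le_norm (f' (x + t • d) - f' x) d
    rw [(hφ t).deriv, ← inner_sub_left]
    nlinarith [mul_le_mul_of_nonneg_right hlip (norm_nonneg d)]
  have h01 := hanti (Set.left_mem_Icc.2 zero_le_one) (Set.right_mem_Icc.2 zero_le_one) zero_le_one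
  simp only [φ, d, zero_smul, add_zero, zero_mul, sub_zero, one_smul, add_sub_cancel, one_mul,
    one_pow, ne_eq, OfNat.ofNat_ne_zero, not_false_eq_true, zero_pow] at h01
  linarith

theorem DBregSym_eq_inner (J : Θ → EReal) (p q θbar θ : Θ) :
    DBregSym J p q θbar θ = ⟪q - p, θbar - θ⟫ := by
  simp only [DBregSym, DBreg, inner_sub_left, inner_sub_right]
  ring

theorem esubgradAt_elasticNet_of_forall_le {J : Θ → EReal} {δ : ℝ} (hδ : δ ≠ 0) {w x : Θ}
    (h : ∀ t, ((‖x - δ • w‖ ^ 2 / (2 * δ) : ℝ) : EReal) + J x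
      ≤ ((‖t - δ • w‖ ^ 2 / (2 * δ) : ℝ) : EReal) + J t) :
    ESubgradAt (elasticNet J δ) w x := by
  have hsq : ∀ t : Θ, ‖t - δ • w‖ ^ 2 / (2 * δ) = ‖t‖ ^ 2 / (2 * δ) - ⟪t, w⟫ + δ * ‖w‖ ^ 2 / 2 := by
    intro t
    rw [norm_sub_sq_real, real_inner_smul_right, norm_smul, Real.norm_eq_abs, mul_pow, sq_abs]
    field_simp
  intro t
  have ht := h t
  rw [add_comm _ (J x), add_comm _ (J t)] at ht
  rw [elasticNet, elasticNet, add_assoc, ← EReal.coe_add]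
  refine EReal.add_coe_le_add_coe_of_sub_eq ht ?_
  rw [hsq, hsq, inner_sub_right, real_inner_comm w, real_inner_comm w]
  ring

theorem ESubgradAt.le_add_sq_of_elasticNet {J : Θ → EReal} {δ : ℝ} {w x : Θ}
    (h : ESubgradAt (elasticNet J δ) w x) (t : Θ) :
    J x + ((⟪w - δ⁻¹ • x, t - x⟫ : ℝ) : EReal) ≤ J t + (((2 * δ)⁻¹ * ‖t - x‖ ^ 2 : ℝ) : EReal) := by
  have ht := h t
  rw [elasticNet, elasticNet, add_assoc, ← EReal.coe_add] at ht
  refine EReal.add_coe_le_add_coe_of_sub_eq ht ?_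
  have hsq : ‖t‖ ^ 2 = ‖x‖ ^ 2 + 2 * ⟪x, t - x⟫ + ‖t - x‖ ^ 2 := by
    rw [← norm_add_sq_real, add_sub_cancel]
  rw [hsq, inner_sub_left, real_inner_smul_left]
  ring

theorem EConvexOn.esubgradAt_of_le_add_sq {J : Θ → EReal} (hJ : EConvexOn J)
    (hbot : ∀ x, J x ≠ ⊥) {p x : Θ} (hx : J x ≠ ⊤) {c : ℝ}
    (h : ∀ t, J x + ((⟪p, t - x⟫ : ℝ) : EReal) ≤ J t + ((c * ‖t - x‖ ^ 2 : ℝ) : EReal)) :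
    ESubgradAt J p x := by
  intro t
  rcases eq_or_ne (J t) ⊤ with ht | ht
  · rw [ht]
    exact le_top
  obtain ⟨a, ha⟩ : ∃ a : ℝ, J x = a := ⟨_, (EReal.coe_toReal hx (hbot x)).symm⟩
  obtain ⟨b, hb⟩ : ∃ b : ℝ, J t = b := ⟨_, (EReal.coe_toReal ht (hbot t)).symm⟩
  rw [ha, hb, ← EReal.coe_add, EReal.coe_le_coe_iff]
  -- Along the segment from `x` to `t` the quadratic term is of second order in `s`.
  have hseg : ∀ s ∈ Set.Ioc (0 : ℝ) 1, ⟪p, t - x⟫ ≤ b - a + s * (c * ‖t - x‖ ^ 2) := by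
    rintro s ⟨hs0, hs1⟩
    have hconv := hJ x t (1 - s) s (by linarith) hs0.le (by ring)
    rw [show (1 - s) • x + s • t = x + s • (t - x) by module, ha, hb, ← EReal.coe_mul,
      ← EReal.coe_mul, ← EReal.coe_add] at hconv
    have hs := (h (x + s • (t - x))).trans (add_le_add_left hconv _)
    rw [ha, ← EReal.coe_add, ← EReal.coe_add, EReal.coe_le_coe_iff, add_sub_cancel_left,
      inner_smul_right, norm_smul, Real.norm_of_nonneg hs0.le] at hs
    nlinarith
  have hlim : Tendsto (fun s : ℝ => b - a + s * (c * ‖t - x‖ ^ 2)) (𝓝[>] 0) (𝓝 (b - a)) :=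
    ((Continuous.tendsto' (by fun_prop) 0 (b - a) (by simp)).mono_left nhdsWithin_le_nhds)
  have := ge_of_tendsto hlim (eventually_of_mem
    (Ioc_mem_nhdsGT_of_mem (show (0 : ℝ) ∈ Set.Ico 0 1 by norm_num)) hseg)
  linarith

theorem ESubgradAt.inner_sub_nonneg {J : Θ → EReal} {p q a b : Θ} (ha : J a ≠ ⊤) (ha' : J a ≠ ⊥)
    (hb : J b ≠ ⊤) (hb' : J b ≠ ⊥) (hp : ESubgradAt J p a) (hq : ESubgradAt J q b) :
    0 ≤ ⟪p - q, a - b⟫ := by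
  have hpb := hp b
  have hqa := hq a
  rw [← EReal.coe_toReal ha ha', ← EReal.coe_toReal hb hb', ← EReal.coe_add,
    EReal.coe_le_coe_iff] at hpb hqa
  have hba : ⟪p, b - a⟫ = -⟪p, a - b⟫ := by rw [← neg_sub, inner_neg_right]
  rw [inner_sub_left]
  linarith

theorem linBreg_step_le [CompleteSpace Θ] {𝓛 : Θ → ℝ} {gradL : Θ → Θ} {L : ℝ}
    (hgrad : ∀ x, HasGradientAt 𝓛 (gradL x) x) (hLip : ∀ x y, ‖gradL x - gradL y‖ ≤ L * ‖x - y‖)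
    (J : Θ → EReal) {δ τ : ℝ} (hδ : δ ≠ 0) (hτ : τ ≠ 0) (v θ θ' : Θ) :
    𝓛 θ' + (1 / τ) * DBregSym J (v - δ⁻¹ • θ) (v - τ • gradL θ - δ⁻¹ • θ') θ' θ
      + (2 - L * δ * τ) / (2 * δ * τ) * ‖θ' - θ‖ ^ 2 ≤ 𝓛 θ := by
  have hD : DBregSym J (v - δ⁻¹ • θ) (v - τ • gradL θ - δ⁻¹ • θ') θ' θ
      = -(τ * ⟪gradL θ, θ' - θ⟫) - δ⁻¹ * ‖θ' - θ‖ ^ 2 := by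
    rw [DBregSym_eq_inner, show v - τ • gradL θ - δ⁻¹ • θ' - (v - δ⁻¹ • θ)
      = -(τ • gradL θ) - δ⁻¹ • (θ' - θ) by module, inner_sub_left, inner_neg_left,
      real_inner_smul_left, real_inner_smul_left, real_inner_self_eq_norm_sq]
  have hcancel : (1 / τ) * (-(τ * ⟪gradL θ, θ' - θ⟫) - δ⁻¹ * ‖θ' - θ‖ ^ 2)
      + (2 - L * δ * τ) / (2 * δ * τ) * ‖θ' - θ‖ ^ 2
      = -⟪gradL θ, θ' - θ⟫ - L / 2 * ‖θ' - θ‖ ^ 2 := by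
    field_simp
    ring
  rw [hD]
  linarith [descent_lemma hgrad hLip θ θ']

end

theorem det_linBreg_loss_decay_general
    {Θ : Type*} [NormedAddCommGroup Θ] [InnerProductSpace ℝ Θ] [CompleteSpace Θ]
    (𝓛 : Θ → ℝ) (gradL : Θ → Θ) (hgrad : ∀ x, HasGradientAt 𝓛 (gradL x) x)
    (L : ℝ) (hLip : ∀ x y : Θ, ‖gradL x - gradL y‖ ≤ L * ‖x - y‖)
    (J : Θ → EReal) (hJconv : EConvexOn J) (hJproper : ∃ x, J x ≠ ⊤)
    (hJbot : ∀ x, J x ≠ ⊥)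
    (δ : ℝ) (hδ : 0 < δ)
    (τ : ℕ → ℝ) (hτpos : ∀ k, 0 < τ k)
    (θ v : ℕ → Θ)
    (hsub0 : ESubgradAt (elasticNet J δ) (v 0) (θ 0))
    (hvrec : ∀ k, v (k + 1) = v k - τ k • gradL (θ k))
    (hθrec : ∀ k, ∀ t : Θ,
      ((‖θ (k + 1) - δ • v (k + 1)‖ ^ 2 / (2 * δ) : ℝ) : EReal) + J (θ (k + 1))
        ≤ ((‖t - δ • v (k + 1)‖ ^ 2 / (2 * δ) : ℝ) : EReal) + J t) :
    (∀ k : ℕ,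
      𝓛 (θ (k + 1)) +
        (1 / τ k) * DBregSym J (v k - δ⁻¹ • θ k) (v (k + 1) - δ⁻¹ • θ (k + 1))
          (θ (k + 1)) (θ k) +
        (2 - L * δ * τ k) / (2 * δ * τ k) * ‖θ (k + 1) - θ k‖ ^ 2 ≤ 𝓛 (θ k)) ∧
    ((∀ k, τ k ≤ 2 / (δ * L)) → ∀ k, 𝓛 (θ (k + 1)) ≤ 𝓛 (θ k)) := by
  have hstep (k : ℕ) := hvrec k ▸
    linBreg_step_le hgrad hLip J hδ.ne' (hτpos k).ne' (v k) (θ k) (θ (k + 1))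
  refine ⟨hstep, fun hτle k => ?_⟩
  have hsubδ : ∀ k, ESubgradAt (elasticNet J δ) (v k) (θ k)
    | 0 => hsub0
    | k + 1 => esubgradAt_elasticNet_of_forall_le hδ.ne' (hθrec k)
  obtain ⟨x₀, hx₀⟩ := hJproper
  have hfin (k : ℕ) : J (θ k) ≠ ⊤ :=
    EReal.ne_top_of_add_coe_le ((hsubδ k).le_add_sq_of_elasticNet x₀) hx₀
  have hsub (k : ℕ) : ESubgradAt J (v k - δ⁻¹ • θ k) (θ k) :=
    hJconv.esubgradAt_of_le_add_sq hJbot (hfin k) (hsubδ k).le_add_sq_of_elasticNet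
  have hbreg : 0 ≤ DBregSym J (v k - δ⁻¹ • θ k) (v (k + 1) - δ⁻¹ • θ (k + 1)) (θ (k + 1)) (θ k) := by
    rw [DBregSym_eq_inner]
    exact (hsub (k + 1)).inner_sub_nonneg (hfin _) (hJbot _) (hfin k) (hJbot _) (hsub k)
  have hδL : 0 < δ * L := (div_pos_iff_of_pos_left two_pos).1 ((hτpos k).trans_le (hτle k))
  have hτδL : τ k * (δ * L) ≤ 2 := (le_div_iff₀ hδL).1 (hτle k)
  have hcoef : 0 ≤ (2 - L * δ * τ k) / (2 * δ * τ k) :=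
    div_nonneg (by linarith) (by linarith [mul_pos hδ (hτpos k)])
  linarith [hstep k, mul_nonneg (one_div_nonneg.2 (hτpos k).le) hbreg,
    mul_nonneg hcoef (sq_nonneg ‖θ (k + 1) - θ k‖)]

/-- **Deterministic loss decay for linearized Bregman iterations.** -/
theorem det_linBreg_loss_decay
    {Θ : Type*} [NormedAddCommGroup Θ] [InnerProductSpace ℝ Θ] [CompleteSpace Θ]
    (𝓛 : Θ → ℝ) (gradL : Θ → Θ) (hgrad : ∀ x, HasGradientAt 𝓛 (gradL x) x)
    (hbdd : ∃ B : ℝ, ∀ x, B ≤ 𝓛 x)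
    (L : ℝ) (hL : 0 < L) (hLip : ∀ x y : Θ, ‖gradL x - gradL y‖ ≤ L * ‖x - y‖)
    (J : Θ → EReal) (hJconv : EConvexOn J) (hJproper : ∃ x, J x ≠ ⊤)
    (hJbot : ∀ x, J x ≠ ⊥) (hJlsc : LowerSemicontinuous J)
    (δ : ℝ) (hδ : 0 < δ)
    (τ : ℕ → ℝ) (hτpos : ∀ k, 0 < τ k)
    (θ v : ℕ → Θ)
    (hsub0 : ESubgradAt (elasticNet J δ) (v 0) (θ 0))
    (hvrec : ∀ k, v (k + 1) = v k - τ k • gradL (θ k))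
    (hθrec : ∀ k, ∀ t : Θ,
      ((‖θ (k + 1) - δ • v (k + 1)‖ ^ 2 / (2 * δ) : ℝ) : EReal) + J (θ (k + 1))
        ≤ ((‖t - δ • v (k + 1)‖ ^ 2 / (2 * δ) : ℝ) : EReal) + J t) :
    (∀ k : ℕ,
      𝓛 (θ (k + 1)) +
        (1 / τ k) * DBregSym J (v k - δ⁻¹ • θ k) (v (k + 1) - δ⁻¹ • θ (k + 1))
          (θ (k + 1)) (θ k) +
        (2 - L * δ * τ k) / (2 * δ * τ k) * ‖θ (k + 1) - θ k‖ ^ 2 ≤ 𝓛 (θ k)) ∧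
    ((∀ k, τ k ≤ 2 / (δ * L)) → ∀ k, 𝓛 (θ (k + 1)) ≤ 𝓛 (θ k)) :=
  det_linBreg_loss_decay_general 𝓛 gradL hgrad L hLip J hJconv hJproper hJbot δ hδ τ hτpos θ v hsub0
    hvrec hθrec
end
end
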